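/- arXiv:1503.05748 — 5 statements merged into one kernel-verified Lean document; each statement's English description precedes it below -/
import Mathlib

section
/- For the k-variate symmetric logistic max-stable distribution with parameter α ∈ (0,1], the extremal concurrence probability equals p = ∏_{j=1}^{k-1} (1 - α/j) = Γ(k - α)/(Γ(k)·Γ(1 - α)). -/
/-!
The variables `X j = Y j ^ (-1/α)` are i.i.d. exponential with rate `λ = Γ(1-α)^(-1/α)`, so
their sum `S` has Laplace transform `(λ/(λ+s))^k`. Writing `S^(-α) = Γ(α)⁻¹ ∫₀^∞ s^(α-1) e^(-sS) ds`
and applying Tonelli gives `E[S^(-α)] = Γ(α)⁻¹ ∫₀^∞ s^(α-1) (λ/(λ+s))^k ds`; expanding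
`(λ+s)^(-k)` as a Gamma integral once more turns this Beta-type integral into
`Γ(k-α) λ^α / Γ(k)`, and `λ^α = Γ(1-α)⁻¹`. The product formula follows from `Γ(x+1) = x Γ(x)`.
-/

open MeasureTheory ProbabilityTheory
open Real Set

theorem lintegral_Ioi_rpow_mul_exp_neg_mul {a r : ℝ} (ha : 0 < a) (hr : 0 < r) :
    ∫⁻ s in Ioi 0, ENNReal.ofReal (s ^ (a - 1) * exp (-(r * s)))
      = ENNReal.ofReal (Gamma a * r ^ (-a)) := by
  have hint : IntegrableOn (fun s : ℝ => s ^ (a - 1) * exp (-(r * s))) (Ioi 0) := by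
    simpa [rpow_one, neg_mul] using
      integrableOn_rpow_mul_exp_neg_mul_rpow (by linarith : (-1 : ℝ) < a - 1) zero_lt_one hr
  rw [← ofReal_integral_eq_lintegral_ofReal hint, integral_rpow_mul_exp_neg_mul_Ioi ha hr,
    one_div, inv_rpow hr.le, ← rpow_neg hr.le, mul_comm]
  exact (ae_restrict_mem measurableSet_Ioi).mono fun s (hs : 0 < s) => by positivity

theorem lintegral_rpow_mul_div_add_pow {a r : ℝ} {k : ℕ} (ha : 0 < a) (hak : a < k) (hr : 0 < r) :
    ∫⁻ s in Ioi 0, ENNReal.ofReal (s ^ (a - 1)) * ENNReal.ofReal (r / (r + s)) ^ k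
      = ENNReal.ofReal (Gamma a * Gamma (k - a) / Gamma k * r ^ a) := by
  have hk : (0 : ℝ) < k := ha.trans hak
  have hrepr : ∀ s ∈ Ioi (0 : ℝ), ENNReal.ofReal (s ^ (a - 1)) * ENNReal.ofReal (r / (r + s)) ^ k
      = ENNReal.ofReal (r ^ k / Gamma k) * ∫⁻ t in Ioi 0, ENNReal.ofReal (s ^ (a - 1)) *
          ENNReal.ofReal (t ^ ((k : ℝ) - 1) * exp (-((r + s) * t))) := by
    intro s (hs : 0 < s)
    rw [lintegral_const_mul _ (by fun_prop), lintegral_Ioi_rpow_mul_exp_neg_mul hk (by positivity),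
      ← ENNReal.ofReal_pow (by positivity), ← ENNReal.ofReal_mul (by positivity),
      ← ENNReal.ofReal_mul (by positivity), ← ENNReal.ofReal_mul (by positivity)]
    congr 1
    rw [rpow_neg (by positivity), rpow_natCast, div_pow]
    field_simp [(Gamma_pos_of_pos hk).ne']
  have hinner : ∀ t ∈ Ioi (0 : ℝ), ∫⁻ s in Ioi 0,
      ENNReal.ofReal (s ^ (a - 1)) * ENNReal.ofReal (t ^ ((k : ℝ) - 1) * exp (-((r + s) * t)))
        = ENNReal.ofReal (Gamma a * (t ^ ((k - a) - 1) * exp (-(r * t)))) := by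
    intro t (ht : 0 < t)
    calc _ = ∫⁻ s in Ioi 0, ENNReal.ofReal (t ^ ((k : ℝ) - 1) * exp (-(r * t)))
          * ENNReal.ofReal (s ^ (a - 1) * exp (-(t * s))) := by
          refine setLIntegral_congr_fun measurableSet_Ioi fun s (hs : 0 < s) => ?_
          rw [← ENNReal.ofReal_mul (by positivity), ← ENNReal.ofReal_mul (by positivity)]
          congr 1
          rw [show -((r + s) * t) = -(r * t) + -(t * s) by ring, exp_add]
          ring
      _ = _ := by
          rw [lintegral_const_mul _ (by fun_prop), lintegral_Ioi_rpow_mul_exp_neg_mul ha ht,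
            ← ENNReal.ofReal_mul (by positivity)]
          congr 1
          rw [show (k : ℝ) - a - 1 = (k - 1) + -a by ring, rpow_add ht]
          ring
  rw [setLIntegral_congr_fun measurableSet_Ioi hrepr, lintegral_const_mul _ (by fun_prop),
    lintegral_lintegral_swap (by fun_prop), setLIntegral_congr_fun measurableSet_Ioi hinner]
  simp_rw [ENNReal.ofReal_mul (Gamma_pos_of_pos ha).le]
  rw [lintegral_const_mul _ (by fun_prop),
    lintegral_Ioi_rpow_mul_exp_neg_mul (sub_pos.2 hak) hr]
  rw [← ENNReal.ofReal_mul (by positivity), ← ENNReal.ofReal_mul (by positivity)]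
  congr 1
  rw [rpow_neg hr.le, rpow_sub hr, rpow_natCast]
  field_simp

theorem Real.Gamma_nat_sub_div_eq_prod {α : ℝ} (hα : α < 1) {k : ℕ} (hk : 1 ≤ k) :
    Gamma (k - α) / (Gamma k * Gamma (1 - α)) = ∏ j ∈ Finset.range (k - 1), (1 - α / (j + 1)) := by
  obtain ⟨n, rfl⟩ := Nat.exists_eq_add_of_le' hk
  simp only [Nat.add_sub_cancel, Nat.cast_add, Nat.cast_one]
  clear hk
  induction n with
  | zero => simp [div_self (Gamma_pos_of_pos (sub_pos.2 hα)).ne']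
  | succ n ih =>
    have hnα : (n : ℝ) + 1 - α ≠ 0 := by have := n.cast_nonneg (α := ℝ); linarith
    have hn : (n : ℝ) + 1 ≠ 0 := by positivity
    rw [Finset.prod_range_succ, ← ih, Nat.cast_succ, add_sub_right_comm, Gamma_add_one hnα,
      Gamma_add_one hn]
    field_simp

theorem lintegral_exp_neg_mul_expMeasure {r s : ℝ} (hr : 0 < r) (hs : 0 ≤ s) :
    ∫⁻ x, ENNReal.ofReal (exp (-(s * x))) ∂expMeasure r = ENNReal.ofReal (r / (r + s)) := by
  have hdens : ∀ x, exponentialPDF r x * ENNReal.ofReal (exp (-(s * x)))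
      = (Ici 0).indicator (fun x => ENNReal.ofReal r *
          ENNReal.ofReal (x ^ (1 - 1 : ℝ) * exp (-((r + s) * x)))) x := by
    intro x
    rcases lt_or_ge x 0 with hx | hx
    · simp [exponentialPDF_of_neg hx, hx]
    · rw [indicator_of_mem (mem_Ici.2 hx), exponentialPDF_of_nonneg hx, sub_self, rpow_zero,
        one_mul, ← ENNReal.ofReal_mul (by positivity), ← ENNReal.ofReal_mul hr.le, mul_assoc,
        ← exp_add]
      ring_nf
  change ∫⁻ x, _ ∂volume.withDensity (exponentialPDF r) = _
  have hpdf : Measurable (exponentialPDF r) := (measurable_exponentialPDFReal r).ennreal_ofReal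
  rw [lintegral_withDensity_eq_lintegral_mul _ hpdf (by fun_prop)]
  simp only [Pi.mul_apply, hdens]
  rw [lintegral_indicator measurableSet_Ici, setLIntegral_congr Ioi_ae_eq_Ici.symm,
    lintegral_const_mul _ (by fun_prop), lintegral_Ioi_rpow_mul_exp_neg_mul one_pos (by linarith),
    Gamma_one, one_mul, ← ENNReal.ofReal_mul hr.le, rpow_neg_one, div_eq_mul_inv]

theorem ae_pos_expMeasure {r : ℝ} (hr : 0 < r) : ∀ᵐ x ∂expMeasure r, 0 < x := by
  have := isProbabilityMeasure_expMeasure hr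
  simp only [ae_iff, not_lt]
  change expMeasure r (Iic 0) = 0
  rw [← ofReal_cdf, cdf_expMeasure_eq hr]
  simp

theorem map_rpow_neg_eq_expMeasure {Ω : Type*} [MeasurableSpace Ω] {μ : Measure Ω}
    [IsProbabilityMeasure μ] {X : Ω → ℝ} (hX : Measurable X) (hpos : ∀ᵐ ω ∂μ, 0 < X ω)
    {α c : ℝ} (hα : 0 < α) (hc : 0 < c)
    (hcdf : ∀ y : ℝ, 0 < y → μ {ω | X ω < y} = ENNReal.ofReal (exp (-(c * y) ^ (-(1 / α))))) :
    μ.map (fun ω => X ω ^ (-(1 / α))) = expMeasure (c ^ (-(1 / α))) := by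
  have hrate : 0 < c ^ (-(1 / α)) := rpow_pos_of_pos hc _
  have hT : Measurable fun ω => X ω ^ (-(1 / α)) := by fun_prop
  have := isProbabilityMeasure_expMeasure hrate
  have := Measure.isProbabilityMeasure_map (μ := μ) hT.aemeasurable
  refine Measure.ext_of_Iic _ _ fun t => ?_
  rw [Measure.map_apply hT measurableSet_Iic, ← ofReal_cdf, cdf_expMeasure_eq hrate]
  rcases le_or_gt t 0 with ht | ht
  · rw [ENNReal.ofReal_eq_zero.2 ?_]
    · refine measure_mono_null (fun ω (hω : X ω ^ (-(1 / α)) ≤ t) => ?_) (ae_iff.1 hpos)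
      exact fun hXω => (rpow_pos_of_pos hXω _).not_ge (hω.trans ht)
    · split_ifs
      · exact sub_nonpos.2 (one_le_exp (neg_nonneg.2 (mul_nonpos_of_nonneg_of_nonpos hrate.le ht)))
      · exact le_rfl
  · have hinv : (t ^ (-α)) ^ (-(1 / α)) = t := by
      rw [← rpow_mul ht.le, neg_mul_neg, mul_one_div_cancel hα.ne', rpow_one]
    have hset : (fun ω => X ω ^ (-(1 / α))) ⁻¹' Iic t =ᵐ[μ] ({ω | X ω < t ^ (-α)}ᶜ : Set Ω) := by
      filter_upwards [hpos] with ω hω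
      change (X ω ^ (-(1 / α)) ≤ t) = ¬ (X ω < t ^ (-α))
      rw [not_lt, ← rpow_le_rpow_iff_of_neg (z := -(1 / α)) hω (rpow_pos_of_pos ht _)
        (neg_lt_zero.2 (by positivity)), hinv]
    rw [measure_congr hset,
      measure_compl (measurableSet_lt hX measurable_const) (measure_ne_top _ _),
      hcdf _ (rpow_pos_of_pos ht _), measure_univ, if_pos ht.le,
      ENNReal.ofReal_sub _ (exp_pos _).le, ENNReal.ofReal_one,
      mul_rpow hc.le (rpow_pos_of_pos ht _).le, hinv]

theorem not_ae_pos_of_forall_measure_lt_eq_one {Ω : Type*} [MeasurableSpace Ω] {μ : Measure Ω}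
    [IsProbabilityMeasure μ] {X : Ω → ℝ} (hX : Measurable X)
    (h : ∀ y : ℝ, 0 < y → μ {ω | X ω < y} = 1) : ¬ ∀ᵐ ω ∂μ, 0 < X ω := by
  intro hpos
  have hlt : ∀ᵐ ω ∂μ, ∀ n : ℕ, X ω < 1 / (n + 1) := ae_all_iff.2 fun n =>
    (prob_compl_eq_zero_iff (hX measurableSet_Iio)).2 (h _ (by positivity))
  obtain ⟨ω, hω, hωpos⟩ := (hlt.and hpos).exists
  obtain ⟨n, hn⟩ := exists_nat_one_div_lt hωpos
  exact (hω n).not_gt hn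

theorem lintegral_rpow_neg_eq_lintegral_laplace {Ω : Type*} [MeasurableSpace Ω] {μ : Measure Ω}
    [SFinite μ] {S : Ω → ℝ} (hS : Measurable S) (hpos : ∀ᵐ ω ∂μ, 0 < S ω) {a : ℝ} (ha : 0 < a) :
    ∫⁻ ω, ENNReal.ofReal (S ω ^ (-a)) ∂μ = ENNReal.ofReal (Gamma a)⁻¹ *
      ∫⁻ s in Ioi 0, ENNReal.ofReal (s ^ (a - 1)) * ∫⁻ ω, ENNReal.ofReal (exp (-(s * S ω))) ∂μ := by
  have hΓ : 0 < Gamma a := Gamma_pos_of_pos ha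
  have hrepr : ∀ᵐ ω ∂μ, ENNReal.ofReal (S ω ^ (-a)) = ENNReal.ofReal (Gamma a)⁻¹ *
      ∫⁻ s in Ioi 0, ENNReal.ofReal (s ^ (a - 1) * exp (-(S ω * s))) := by
    filter_upwards [hpos] with ω hω
    rw [lintegral_Ioi_rpow_mul_exp_neg_mul ha hω, ← ENNReal.ofReal_mul (by positivity),
      inv_mul_cancel_left₀ hΓ.ne']
  rw [lintegral_congr_ae hrepr, lintegral_const_mul _ (by fun_prop),
    lintegral_lintegral_swap (by fun_prop)]
  congr 1
  refine setLIntegral_congr_fun measurableSet_Ioi fun s (hs : 0 < s) => ?_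
  rw [← lintegral_const_mul _ (by fun_prop)]
  refine lintegral_congr fun ω => ?_
  rw [← ENNReal.ofReal_mul (by positivity), mul_comm s]

theorem lintegral_exp_neg_mul_sum_of_iIndepFun {Ω ι : Type*} [MeasurableSpace Ω] {μ : Measure Ω}
    [Fintype ι] {X : ι → Ω → ℝ} (hX : ∀ i, Measurable (X i)) (hindep : iIndepFun X μ) (s : ℝ) :
    ∫⁻ ω, ENNReal.ofReal (exp (-(s * ∑ i, X i ω))) ∂μ
      = ∏ i, ∫⁻ ω, ENNReal.ofReal (exp (-(s * X i ω))) ∂μ := by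
  have hg : Measurable fun x : ℝ => ENNReal.ofReal (exp (-(s * x))) := by fun_prop
  refine (lintegral_congr fun ω => ?_).trans (lintegral_prod_eq_prod_lintegral_of_indepFun _ _
    (hindep.comp _ fun _ => hg) fun i => hg.comp (hX i))
  rw [← ENNReal.ofReal_prod_of_nonneg fun i _ => (exp_pos _).le, ← exp_sum, Finset.mul_sum,
    Finset.sum_neg_distrib]

theorem integral_rpow_neg_sum_of_iIndepFun_expMeasure {Ω ι : Type*} [MeasurableSpace Ω]
    {μ : Measure Ω} [IsProbabilityMeasure μ] [Fintype ι] {X : ι → Ω → ℝ}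
    (hX : ∀ i, Measurable (X i)) (hindep : iIndepFun X μ) {r : ℝ} (hr : 0 < r)
    (hlaw : ∀ i, μ.map (X i) = expMeasure r) {a : ℝ} (ha : 0 < a) (hak : a < Fintype.card ι) :
    ∫ ω, (∑ i, X i ω) ^ (-a) ∂μ
      = Gamma (Fintype.card ι - a) / Gamma (Fintype.card ι) * r ^ a := by
  have : Nonempty ι := Fintype.card_pos_iff.1 (by exact_mod_cast ha.trans hak)
  have hS : Measurable fun ω => ∑ i, X i ω := Finset.measurable_sum _ fun i _ => hX i
  have hSpos : ∀ᵐ ω ∂μ, 0 < ∑ i, X i ω := by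
    have hXpos : ∀ i, ∀ᵐ ω ∂μ, 0 < X i ω := fun i =>
      ae_of_ae_map (hX i).aemeasurable (hlaw i ▸ ae_pos_expMeasure hr)
    filter_upwards [ae_all_iff.2 hXpos] with ω hω
    exact Finset.sum_pos (fun i _ => hω i) Finset.univ_nonempty
  have hlaplace : ∀ s ∈ Ioi (0 : ℝ), ENNReal.ofReal (s ^ (a - 1)) *
      ∫⁻ ω, ENNReal.ofReal (exp (-(s * ∑ i, X i ω))) ∂μ
        = ENNReal.ofReal (s ^ (a - 1)) * ENNReal.ofReal (r / (r + s)) ^ Fintype.card ι := by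
    intro s (hs : 0 < s)
    rw [lintegral_exp_neg_mul_sum_of_iIndepFun hX hindep]
    congr 1
    refine (Finset.prod_congr rfl fun i _ => ?_).trans (Finset.prod_const _)
    have hg : Measurable fun x : ℝ => ENNReal.ofReal (exp (-(s * x))) := by fun_prop
    rw [← lintegral_exp_neg_mul_expMeasure hr hs.le, ← hlaw i, lintegral_map hg (hX i)]
  have hmoment : ∫⁻ ω, ENNReal.ofReal ((∑ i, X i ω) ^ (-a)) ∂μ
      = ENNReal.ofReal (Gamma (Fintype.card ι - a) / Gamma (Fintype.card ι) * r ^ a) := by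
    rw [lintegral_rpow_neg_eq_lintegral_laplace hS hSpos ha,
      setLIntegral_congr_fun measurableSet_Ioi hlaplace, lintegral_rpow_mul_div_add_pow ha hak hr,
      ← ENNReal.ofReal_mul (inv_nonneg.2 (Gamma_pos_of_pos ha).le)]
    congr 1
    field_simp [(Gamma_pos_of_pos ha).ne']
  rw [integral_eq_lintegral_of_nonneg_ae (hSpos.mono fun ω hω => (rpow_pos_of_pos hω _).le)
    (hS.pow_const _).aestronglyMeasurable, hmoment, ENNReal.toReal_ofReal]
  have := Gamma_pos_of_pos (sub_pos.2 hak)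
  have := Gamma_pos_of_pos (ha.trans hak)
  positivity

/-- For the `k`-variate symmetric logistic max-stable model with parameter `α ∈ (0,1]`,
whose spectral representation uses i.i.d. `Y j` with `P(Y < y) = exp(-(Γ(1-α)y)^{-1/α})`,
the extremal concurrence probability `p = E[(∑ⱼ Y(sⱼ)^{-1/α})^{-α}]` equals
`Γ(k-α)/(Γ(k)Γ(1-α)) = ∏_{j=1}^{k-1} (1 - α/j)`. -/
theorem stmt4 {Ω : Type*} [MeasureSpace Ω] [IsProbabilityMeasure (ℙ : Measure Ω)]
    (k : ℕ) (hk : 2 ≤ k) (α : ℝ) (hα : α ∈ Set.Ioc (0:ℝ) 1)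
    (Y : Fin k → Ω → ℝ) (hmeas : ∀ j, Measurable (Y j))
    (hindep : iIndepFun Y ℙ)
    (hpos : ∀ j, ∀ᵐ ω ∂ℙ, 0 < Y j ω)
    (hcdf : ∀ j, ∀ y : ℝ, 0 < y →
      ℙ {ω | Y j ω < y}
        = ENNReal.ofReal (Real.exp (-(Real.Gamma (1 - α) * y) ^ (-(1/α))))) :
    (∫ ω, (∑ j, (Y j ω) ^ (-(1/α))) ^ (-α) ∂ℙ)
        = Real.Gamma (k - α) / (Real.Gamma k * Real.Gamma (1 - α))
      ∧ Real.Gamma (k - α) / (Real.Gamma k * Real.Gamma (1 - α))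
        = ∏ j ∈ Finset.range (k - 1), (1 - α / (j + 1)) := by
  obtain ⟨hα0, hα1⟩ := hα
  rcases hα1.lt_or_eq with hα1 | rfl
  · have hc : 0 < Gamma (1 - α) := Gamma_pos_of_pos (sub_pos.2 hα1)
    have hr : 0 < Gamma (1 - α) ^ (-(1 / α)) := rpow_pos_of_pos hc _
    have hlaw j := map_rpow_neg_eq_expMeasure (hmeas j) (hpos j) hα0 hc (hcdf j)
    have hmoment := integral_rpow_neg_sum_of_iIndepFun_expMeasure (fun j => (hmeas j).pow_const _)
      (hindep.comp _ fun _ => measurable_id.pow_const _) hr hlaw hα0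
      (by rw [Fintype.card_fin]; linarith [show (2 : ℝ) ≤ k by exact_mod_cast hk])
    refine ⟨?_, Gamma_nat_sub_div_eq_prod hα1 (by omega)⟩
    rw [hmoment, Fintype.card_fin, ← rpow_mul hc.le, neg_mul, one_div_mul_cancel hα0.ne',
      rpow_neg_one, ← div_eq_mul_inv, div_div]
  · -- With Mathlib's junk value `Gamma 0 = 0`, `hcdf` forces `Y j ≤ 0` almost surely.
    exfalso
    refine not_ae_pos_of_forall_measure_lt_eq_one (hmeas ⟨0, by omega⟩) (fun y hy => ?_)
      (hpos ⟨0, by omega⟩)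
    simp [hcdf _ y hy]
end

section
/- For the max-linear model η(s) = max_{m=1..n} φ_m(s)·Z_m with independent unit Fréchet Z_m and nonnegative weights satisfying ∑_m φ_m(s) = 1 for each s, the probability that component ℓ dominates at sites s_1,...,s_k (i.e., η(s_j) = φ_ℓ(s_j)·Z_ℓ for all j) equals p_ℓ = [∑_{m=1}^n max_{j=1..k} φ_m(s_j)/φ_ℓ(s_j)]^{-1}, with conventions 0/0 = 0, a/0 = ∞ for a > 0, 1/∞ = 0. -/
/-! Put `a_m = max_j φ_m(s_j) / φ_ℓ(s_j)`. If `φ_ℓ(s_j) = 0 < φ_m(s_j)` for some `j`, then `a_m = ∞`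
and `ℓ` almost surely never dominates at `s_j`. Otherwise, as the `Z_m` are a.s. positive, `ℓ`
dominates iff `a_m Z_m ≤ Z_ℓ` for all `m ≠ ℓ`. Conditioning on `Z_ℓ`, independence turns this
probability into `E[∏_{m ≠ ℓ} exp (-a_m / Z_ℓ)] = E[G(Z_ℓ)^S]`, where `S = ∑_{m ≠ ℓ} a_m` and
`G z = exp (-1 / z)` is the Fréchet CDF. Since `G(Z_ℓ)` is uniform on `[0, 1]`, this equals
`1 / (1 + S)`, and `a_ℓ = 1` makes the right-hand side `(1 + S)⁻¹` as well. -/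

open MeasureTheory ProbabilityTheory Set

noncomputable def frechetCDF (z : ℝ) : ℝ := if 0 < z then Real.exp (-1 / z) else 0

lemma measurable_frechetCDF : Measurable frechetCDF :=
  Measurable.ite measurableSet_Ioi (by fun_prop) measurable_const

lemma frechetCDF_mem_Icc (z : ℝ) : frechetCDF z ∈ Icc 0 1 := by
  unfold frechetCDF
  split_ifs with hz
  · exact ⟨(Real.exp_pos _).le,
      Real.exp_le_one_iff.2 (div_nonpos_of_nonpos_of_nonneg (by norm_num) hz.le)⟩
  · exact ⟨le_rfl, zero_le_one⟩

lemma frechetCDF_pos_iff {z : ℝ} : 0 < frechetCDF z ↔ 0 < z := by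
  unfold frechetCDF
  split_ifs with hz <;> simp [hz, Real.exp_pos]

lemma frechetCDF_preimage_Iic {t : ℝ} (ht : 0 < t) :
    frechetCDF ⁻¹' Iic (Real.exp (-1 / t)) = Iic t := by
  ext z
  simp only [mem_preimage, mem_Iic, frechetCDF]
  split_ifs with hz
  · rw [Real.exp_le_exp, neg_div, neg_div, neg_le_neg_iff, one_div_le_one_div ht hz]
  · exact ⟨fun _ => (not_lt.1 hz).trans ht.le, fun _ => (Real.exp_pos _).le⟩

lemma integral_rpow_Icc_zero_one {S : ℝ} (hS : 0 ≤ S) :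
    ∫ u in Icc (0 : ℝ) 1, u ^ S = (1 + S)⁻¹ := by
  rw [integral_Icc_eq_integral_Ioc, ← intervalIntegral.integral_of_le zero_le_one,
    integral_rpow (Or.inl (by linarith)), Real.one_rpow, Real.zero_rpow (by linarith), add_comm]
  simp

def HasUnitFrechetCDF {Ω : Type*} [MeasurableSpace Ω] (μ : Measure Ω) (X : Ω → ℝ) : Prop :=
  ∀ z, 0 < z → μ {ω | X ω ≤ z} = ENNReal.ofReal (Real.exp (-1 / z))

section Frechet

variable {Ω : Type*} [MeasurableSpace Ω] {μ : Measure Ω} [IsProbabilityMeasure μ] {X : Ω → ℝ}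

lemma measure_frechetCDF_le (hpos : ∀ᵐ ω ∂μ, 0 < X ω) (hF : HasUnitFrechetCDF μ X) (u : ℝ) :
    μ {ω | frechetCDF (X ω) ≤ u} = volume (Iic u ∩ Icc 0 1) := by
  rcases le_or_gt u 0 with hu₀ | hu₀
  · have hnull : μ {ω | frechetCDF (X ω) ≤ u} = 0 :=
      measure_mono_null (fun ω (hω : frechetCDF (X ω) ≤ u) (hXω : 0 < X ω) =>
        (hω.trans hu₀).not_gt (frechetCDF_pos_iff.2 hXω)) (ae_iff.1 hpos)
    rw [hnull, eq_comm, ← nonpos_iff_eq_zero]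
    calc volume (Iic u ∩ Icc 0 1) ≤ volume ({0} : Set ℝ) :=
          measure_mono fun x hx => le_antisymm (hx.1.trans hu₀) hx.2.1
      _ = 0 := Real.volume_singleton
  rcases le_or_gt 1 u with hu₁ | hu₁
  · rw [show {ω | frechetCDF (X ω) ≤ u} = univ from
      eq_univ_of_forall fun ω => (frechetCDF_mem_Icc _).2.trans hu₁,
      inter_eq_right.2 (Icc_subset_Iic_self.trans (Iic_subset_Iic.2 hu₁)), measure_univ,
      Real.volume_Icc]
    simp
  · have ht : 0 < -(Real.log u)⁻¹ := neg_pos.2 (inv_lt_zero.2 (Real.log_neg hu₀ hu₁))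
    have hu : Real.exp (-1 / -(Real.log u)⁻¹) = u := by
      rw [neg_div_neg_eq, one_div, inv_inv, Real.exp_log hu₀]
    have hpre := frechetCDF_preimage_Iic ht
    rw [hu] at hpre
    rw [show {ω | frechetCDF (X ω) ≤ u} = {ω | X ω ≤ -(Real.log u)⁻¹} from
      congrArg (X ⁻¹' ·) hpre, hF _ ht, hu,
      show Iic u ∩ Icc 0 1 = Icc 0 u by ext x; simp only [mem_inter_iff, mem_Iic, mem_Icc]; grind,
      Real.volume_Icc, sub_zero]

lemma map_frechetCDF_eq (hX : Measurable X) (hpos : ∀ᵐ ω ∂μ, 0 < X ω) (hF : HasUnitFrechetCDF μ X) :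
    μ.map (frechetCDF ∘ X) = volume.restrict (Icc 0 1) := by
  have := Measure.isProbabilityMeasure_map (μ := μ) (measurable_frechetCDF.comp hX).aemeasurable
  refine Measure.ext_of_Iic _ _ fun u => ?_
  rw [Measure.map_apply (measurable_frechetCDF.comp hX) measurableSet_Iic,
    Measure.restrict_apply measurableSet_Iic]
  exact measure_frechetCDF_le hpos hF u

lemma lintegral_exp_neg_div_eq (hX : Measurable X) (hpos : ∀ᵐ ω ∂μ, 0 < X ω)
    (hF : HasUnitFrechetCDF μ X) {S : ℝ} (hS : 0 ≤ S) :
    ∫⁻ ω, ENNReal.ofReal (Real.exp (-S / X ω)) ∂μ = (ENNReal.ofReal (1 + S))⁻¹ := by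
  have hpow : Continuous fun u : ℝ => u ^ S := continuous_id.rpow_const fun _ => Or.inr hS
  calc ∫⁻ ω, ENNReal.ofReal (Real.exp (-S / X ω)) ∂μ
      = ∫⁻ ω, ENNReal.ofReal (frechetCDF (X ω) ^ S) ∂μ := by
        refine lintegral_congr_ae (hpos.mono fun ω hω => ?_)
        simp only [frechetCDF, if_pos hω]
        rw [← Real.exp_mul, div_mul_eq_mul_div, neg_one_mul]
    _ = ∫⁻ u in Icc 0 1, ENNReal.ofReal (u ^ S) := by
        rw [← map_frechetCDF_eq hX hpos hF,
          lintegral_map (by fun_prop) (measurable_frechetCDF.comp hX)]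
        rfl
    _ = ENNReal.ofReal (∫ u in Icc (0 : ℝ) 1, u ^ S) :=
        (ofReal_integral_eq_lintegral_ofReal hpow.continuousOn.integrableOn_Icc
          ((ae_restrict_mem measurableSet_Icc).mono fun u hu => Real.rpow_nonneg hu.1 S)).symm
    _ = (ENNReal.ofReal (1 + S))⁻¹ := by
        rw [integral_rpow_Icc_zero_one hS, ENNReal.ofReal_inv_of_pos (by linarith)]

lemma measure_mul_le_eq (hF : HasUnitFrechetCDF μ X) {a z : ℝ} (ha : 0 ≤ a) (hz : 0 < z) :
    μ {ω | a * X ω ≤ z} = ENNReal.ofReal (Real.exp (-a / z)) := by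
  rcases ha.eq_or_lt with rfl | ha
  · simp [hz.le]
  · rw [show {ω | a * X ω ≤ z} = {ω | X ω ≤ z / a} by ext; simp [le_div_iff₀ ha, mul_comm],
      hF _ (div_pos hz ha), div_div_eq_mul_div, neg_one_mul, neg_div]

end Frechet

section Independence

variable {Ω : Type*} [MeasurableSpace Ω] {μ : Measure Ω} [IsProbabilityMeasure μ]

lemma ProbabilityTheory.IndepFun.measure_preimage_prodMk {α β : Type*} [MeasurableSpace α]
    [MeasurableSpace β] {X : Ω → α} {Y : Ω → β} (h : IndepFun X Y μ) (hX : Measurable X)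
    (hY : Measurable Y) {C : Set (α × β)} (hC : MeasurableSet C) :
    μ ((fun ω => (X ω, Y ω)) ⁻¹' C) = ∫⁻ ω, μ (Y ⁻¹' (Prod.mk (X ω) ⁻¹' C)) ∂μ := by
  have := Measure.isProbabilityMeasure_map (μ := μ) hY.aemeasurable
  rw [← Measure.map_apply (hX.prodMk hY) hC,
    (indepFun_iff_map_prod_eq_prod_map_map hX.aemeasurable hY.aemeasurable).1 h,
    Measure.prod_apply hC, lintegral_map (measurable_measure_prodMk_left hC) hX]
  exact lintegral_congr fun ω => Measure.map_apply hY (measurable_prodMk_left hC)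

lemma ProbabilityTheory.iIndepFun.measure_forall_mul_le {ι : Type*} {Z : ι → Ω → ℝ}
    (hindep : iIndepFun Z μ) (hmeas : ∀ i, Measurable (Z i)) (a : ι → ℝ) {ℓ : ι}
    {T : Finset ι} (hℓT : ℓ ∉ T) :
    μ {ω | ∀ i ∈ T, a i * Z i ω ≤ Z ℓ ω} =
      ∫⁻ ω, ∏ i ∈ T, μ {ω' | a i * Z i ω' ≤ Z ℓ ω} ∂μ := by
  set W : Ω → T → ℝ := fun ω i => Z i ω
  have hW : Measurable W := measurable_pi_lambda _ fun i => hmeas i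
  have hind : IndepFun (Z ℓ) W μ :=
    (hindep.indepFun_finset {ℓ} T (Finset.disjoint_singleton_left.2 hℓT) hmeas).comp
      (measurable_pi_apply (⟨ℓ, Finset.mem_singleton_self ℓ⟩ : ({ℓ} : Finset ι))) measurable_id
  have hC : MeasurableSet {p : ℝ × (T → ℝ) | ∀ i : T, a i * p.2 i ≤ p.1} := by
    simp only [ofPred_forall]
    exact MeasurableSet.iInter fun i => measurableSet_le (by fun_prop) (by fun_prop)
  convert hind.measure_preimage_prodMk (hmeas ℓ) hW hC using 2
  · ext ω'
    simp [W]
  · funext ω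
    rw [← hindep.meas_biInter (S := T) (s := fun i => {ω' | a i * Z i ω' ≤ Z ℓ ω})
      fun i _ => ⟨{x | a i * x ≤ Z ℓ ω}, measurableSet_le (by fun_prop) measurable_const, rfl⟩]
    congr 1
    ext ω'
    simp [W]

end Independence

lemma ciSup_eq_iff_forall_le {ι α : Type*} [ConditionallyCompleteLattice α] {f : ι → α}
    (hf : BddAbove (range f)) (ℓ : ι) : (⨆ i, f i) = f ℓ ↔ ∀ i, f i ≤ f ℓ :=
  have : Nonempty ι := ⟨ℓ⟩
  ⟨fun h i => h ▸ le_ciSup hf i, fun h => le_antisymm (ciSup_le h) (le_ciSup hf ℓ)⟩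

lemma ciSup_div_mul_le_iff {κ : Type*} [Finite κ] [Nonempty κ] {p q : κ → ℝ}
    (hq : ∀ j, 0 < q j) {x y : ℝ} (hx : 0 < x) :
    (⨆ j, p j / q j) * x ≤ y ↔ ∀ j, p j * x ≤ q j * y := by
  rw [← le_div_iff₀ hx, ciSup_le_iff (finite_range _).bddAbove]
  exact forall_congr' fun j => by rw [div_le_div_iff₀ (hq j) hx, mul_comm y]

section MaxLinear

variable {ι κ : Type*} [Finite ι] {φ : ι → κ → ℝ} {z : ι → ℝ} {ℓ : ι}

lemma iSup_mul_eq_iff_forall_le :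
    (∀ j, ⨆ m, φ m j * z m = φ ℓ j * z ℓ) ↔ ∀ m j, φ m j * z m ≤ φ ℓ j * z ℓ := by
  simp only [ciSup_eq_iff_forall_le (finite_range _).bddAbove ℓ]
  exact forall_comm

lemma iSup_mul_eq_iff_forall_ne [Finite κ] [Nonempty κ] (hz : ∀ m, 0 < z m)
    (hℓ : ∀ j, 0 < φ ℓ j) :
    (∀ j, ⨆ m, φ m j * z m = φ ℓ j * z ℓ) ↔ ∀ m ≠ ℓ, (⨆ j, φ m j / φ ℓ j) * z m ≤ z ℓ := by
  rw [iSup_mul_eq_iff_forall_le]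
  refine ⟨fun h m _ => (ciSup_div_mul_le_iff hℓ (hz m)).2 (h m), fun h m => ?_⟩
  rcases eq_or_ne m ℓ with rfl | hm
  · exact fun j => le_rfl
  · exact (ciSup_div_mul_le_iff hℓ (hz m)).1 (h m hm)

lemma not_forall_iSup_mul_eq {m : ι} {j : κ} (hz : 0 < z m) (hm : 0 < φ m j) (hℓ : φ ℓ j = 0) :
    ¬∀ j, ⨆ m, φ m j * z m = φ ℓ j * z ℓ := fun h => by
  have := iSup_mul_eq_iff_forall_le.1 h m j
  rw [hℓ, zero_mul] at this
  exact this.not_gt (mul_pos hm hz)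

end MaxLinear

section Weights

variable {ι κ : Type*} [Fintype ι] {φ : ι → κ → ℝ} {ℓ : ι}

lemma sum_iSup_ofReal_div_eq [DecidableEq ι] [Finite κ] [Nonempty κ] (hφ : ∀ m j, 0 ≤ φ m j)
    (hℓ : ∀ j, 0 < φ ℓ j) :
    ∑ m, ⨆ j, ENNReal.ofReal (φ m j) / ENNReal.ofReal (φ ℓ j) =
      ENNReal.ofReal (1 + ∑ m ∈ Finset.univ.erase ℓ, ⨆ j, φ m j / φ ℓ j) := by
  have hsup : ∀ m, ⨆ j, ENNReal.ofReal (φ m j) / ENNReal.ofReal (φ ℓ j) =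
      ENNReal.ofReal (⨆ j, φ m j / φ ℓ j) := fun m => by
    simp_rw [← ENNReal.ofReal_div_of_pos (hℓ _)]
    exact (Monotone.map_ciSup_of_continuousAt ENNReal.continuous_ofReal.continuousAt
      (fun _ _ => ENNReal.ofReal_le_ofReal) (finite_range _).bddAbove).symm
  have hnonneg : ∀ m, 0 ≤ ⨆ j, φ m j / φ ℓ j := fun m =>
    Real.iSup_nonneg fun j => div_nonneg (hφ m j) (hℓ j).le
  simp_rw [hsup]
  rw [← ENNReal.ofReal_sum_of_nonneg fun m _ => hnonneg m,
    ← Finset.add_sum_erase _ _ (Finset.mem_univ ℓ)]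
  simp [div_self (hℓ _).ne']

lemma sum_iSup_ofReal_div_eq_top {m : ι} {j : κ} (hm : 0 < φ m j) (hℓ : φ ℓ j = 0) :
    ∑ m, ⨆ j, ENNReal.ofReal (φ m j) / ENNReal.ofReal (φ ℓ j) = ⊤ := by
  refine top_le_iff.1 (le_trans ?_
    (Finset.single_le_sum (fun _ _ => zero_le) (Finset.mem_univ m)))
  refine le_iSup_of_le j ?_
  rw [hℓ, ENNReal.ofReal_zero, ENNReal.div_zero (ENNReal.ofReal_pos.2 hm).ne']

end Weights

theorem stmt6_general {Ω : Type*} [MeasureSpace Ω] [IsProbabilityMeasure (ℙ : Measure Ω)]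
    (n k : ℕ) (hk : 0 < k)
    (Z : Fin n → Ω → ℝ) (φ : Fin n → Fin k → ℝ)
    (hφ : ∀ m j, 0 ≤ φ m j) (hsum : ∀ j, ∑ m, φ m j = 1)
    (hmeas : ∀ m, Measurable (Z m))
    (hindep : iIndepFun Z ℙ)
    (hpos : ∀ m, ∀ᵐ ω ∂ℙ, 0 < Z m ω)
    (hF : ∀ m, ∀ z : ℝ, 0 < z → ℙ {ω | Z m ω ≤ z} = ENNReal.ofReal (Real.exp (-1 / z)))
    (ℓ : Fin n) :
    ℙ {ω | ∀ j, (⨆ m, φ m j * Z m ω) = φ ℓ j * Z ℓ ω}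
      = (∑ m, ⨆ j, ENNReal.ofReal (φ m j) / ENNReal.ofReal (φ ℓ j))⁻¹ := by
  have hZ : ∀ᵐ ω ∂ℙ, ∀ m, 0 < Z m ω := ae_all_iff.2 hpos
  by_cases hℓ : ∀ j, 0 < φ ℓ j
  · have : Nonempty (Fin k) := Fin.pos_iff_nonempty.1 hk
    set a : Fin n → ℝ := fun m => ⨆ j, φ m j / φ ℓ j
    have ha : ∀ m, 0 ≤ a m := fun m => Real.iSup_nonneg fun j => div_nonneg (hφ m j) (hℓ j).le
    have hevent : {ω | ∀ j, (⨆ m, φ m j * Z m ω) = φ ℓ j * Z ℓ ω} =ᵐ[ℙ]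
        {ω | ∀ m ∈ Finset.univ.erase ℓ, a m * Z m ω ≤ Z ℓ ω} := by
      filter_upwards [hZ] with ω hω
      simp only [Finset.mem_erase, Finset.mem_univ, and_true, eq_iff_iff]
      exact iSup_mul_eq_iff_forall_ne hω hℓ
    rw [measure_congr hevent, hindep.measure_forall_mul_le hmeas a (Finset.notMem_erase ℓ _),
      sum_iSup_ofReal_div_eq hφ hℓ,
      ← lintegral_exp_neg_div_eq (hmeas ℓ) (hpos ℓ) (hF ℓ) (Finset.sum_nonneg fun m _ => ha m)]
    refine lintegral_congr_ae ((hpos ℓ).mono fun ω hω => ?_)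
    beta_reduce
    rw [Finset.prod_congr rfl fun m _ => measure_mul_le_eq (hF m) (ha m) hω,
      ← ENNReal.ofReal_prod_of_nonneg fun _ _ => (Real.exp_pos _).le, ← Real.exp_sum,
      ← Finset.sum_neg_distrib, Finset.sum_div]
  · obtain ⟨j, hj⟩ := not_forall.1 hℓ
    have hℓj : φ ℓ j = 0 := le_antisymm (not_lt.1 hj) (hφ ℓ j)
    obtain ⟨m, -, hm⟩ := Finset.exists_ne_zero_of_sum_ne_zero ((hsum j).trans_ne one_ne_zero)
    have hmj : 0 < φ m j := (hφ m j).lt_of_ne' hm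
    rw [sum_iSup_ofReal_div_eq_top hmj hℓj, ENNReal.inv_top, measure_eq_zero_iff_ae_notMem]
    filter_upwards [hZ] with ω hω using not_forall_iSup_mul_eq (hω m) hmj hℓj

/-- In the max-linear model `η(s_j) = max_m φ_m(s_j)·Z_m` with independent unit Fréchet `Z_m`
and nonnegative weights summing to one at each site, the probability that component `ℓ`
dominates at all `k` sites equals `[∑_m max_j φ_m(s_j)/φ_ℓ(s_j)]⁻¹`, with the extended
conventions `0/0 = 0`, `a/0 = ∞` for `a > 0`, `1/∞ = 0` (division in `ℝ≥0∞`). -/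
theorem stmt6 {Ω : Type*} [MeasureSpace Ω] [IsProbabilityMeasure (ℙ : Measure Ω)]
    (n k : ℕ) (hn : 0 < n) (hk : 0 < k)
    (Z : Fin n → Ω → ℝ) (φ : Fin n → Fin k → ℝ)
    (hφ : ∀ m j, 0 ≤ φ m j) (hsum : ∀ j, ∑ m, φ m j = 1)
    (hmeas : ∀ m, Measurable (Z m))
    (hindep : iIndepFun Z ℙ)
    (hpos : ∀ m, ∀ᵐ ω ∂ℙ, 0 < Z m ω)
    (hF : ∀ m, ∀ z : ℝ, 0 < z → ℙ {ω | Z m ω ≤ z} = ENNReal.ofReal (Real.exp (-1 / z)))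
    (ℓ : Fin n) :
    ℙ {ω | ∀ j, (⨆ m, φ m j * Z m ω) = φ ℓ j * Z ℓ ω}
      = (∑ m, ⨆ j, ENNReal.ofReal (φ m j) / ENNReal.ofReal (φ ℓ j))⁻¹ :=
  stmt6_general n k hk Z φ hφ hsum hmeas hindep hpos hF ℓ
end

section
/- For a Chentsov max-stable field built from a random set A (spectral process Y(s) = 1_A(s)), the extremal concurrence probability at sites s_1,...,s_k equals E[min_j 1_A(s_j)] / E[max_j 1_A(s_j)] = P({s_1,...,s_k} ⊂ A) / P({s_1,...,s_k} ∩ A ≠ ∅), i.e., the conditional probability that A covers all k sites given it covers at least one. -/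
open MeasureTheory ProbabilityTheory
open scoped ENNReal NNReal

/- Chentsov max-stable fields: with spectral process `Y = 1_A` for a random set `A`,
the concurrence probability `E_Y([E_Ỹ max_j Ỹ(s_j)/Y(s_j)]⁻¹ 1{min_j Y(s_j) > 0})`
(ratios in `ℝ≥0∞`, inner expectation over an independent copy) equals
`P(all sites in A) / P(some site in A)`, the conditional covering probability. -/
open Classical in
theorem stmt8 {Ω S : Type*} [MeasureSpace Ω] [IsProbabilityMeasure (ℙ : Measure Ω)]
    (k : ℕ) (hk : 0 < k) (A : Ω → Set S) (s : Fin k → S)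
    (hmeas : ∀ x : S, MeasurableSet {ω | x ∈ A ω})
    (hpos : ∀ j, 0 < ℙ {ω | s j ∈ A ω}) :
    (∫⁻ ω, (∫⁻ ω', ⨆ j, (if s j ∈ A ω' then (1:ℝ≥0∞) else 0)
            / (if s j ∈ A ω then (1:ℝ≥0∞) else 0) ∂ℙ)⁻¹
        * (if ∀ j, s j ∈ A ω then (1:ℝ≥0∞) else 0) ∂ℙ)
      = ℙ {ω | ∀ j, s j ∈ A ω} / ℙ {ω | ∃ j, s j ∈ A ω} := by
  have hE : MeasurableSet {ω | ∃ j, s j ∈ A ω} := by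
    have : {ω | ∃ j, s j ∈ A ω} = ⋃ j, {ω | s j ∈ A ω} := by
      ext ω; simp
    rw [this]
    exact MeasurableSet.iUnion fun j => hmeas (s j)
  have hA : MeasurableSet {ω | ∀ j, s j ∈ A ω} := by
    have : {ω | ∀ j, s j ∈ A ω} = ⋂ j, {ω | s j ∈ A ω} := by
      ext ω; simp
    rw [this]
    exact MeasurableSet.iInter fun j => hmeas (s j)
  set p := ℙ {ω | ∃ j, s j ∈ A ω} with hp
  set q := ℙ {ω | ∀ j, s j ∈ A ω} with hq
  -- inner supremum equals indicator of the union
  have hsup : ∀ ω' : Ω, (⨆ j, (if s j ∈ A ω' then (1:ℝ≥0∞) else 0))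
      = Set.indicator {ω | ∃ j, s j ∈ A ω} (fun _ => (1:ℝ≥0∞)) ω' := by
    intro ω'
    by_cases h' : ∃ j, s j ∈ A ω'
    · obtain ⟨j0, hj0⟩ := h'
      rw [Set.indicator_of_mem (by exact ⟨j0, hj0⟩)]
      refine le_antisymm (iSup_le fun j => ?_) ?_
      · split_ifs <;> simp
      · have := le_iSup (fun j => (if s j ∈ A ω' then (1:ℝ≥0∞) else 0)) j0
        simpa [hj0] using this
    · rw [Set.indicator_of_notMem (show ω' ∉ {ω | ∃ j, s j ∈ A ω} from h')]
      push_neg at h'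
      simp [h']
  have hinner : (∫⁻ ω', ⨆ j, (if s j ∈ A ω' then (1:ℝ≥0∞) else 0) ∂ℙ) = p := by
    rw [lintegral_congr hsup, lintegral_indicator_const hE 1]
    simp [hp]
  have hstep : (∫⁻ ω, (∫⁻ ω', ⨆ j, (if s j ∈ A ω' then (1:ℝ≥0∞) else 0)
            / (if s j ∈ A ω then (1:ℝ≥0∞) else 0) ∂ℙ)⁻¹
        * (if ∀ j, s j ∈ A ω then (1:ℝ≥0∞) else 0) ∂ℙ)
      = ∫⁻ ω, Set.indicator {ω | ∀ j, s j ∈ A ω} (fun _ => p⁻¹) ω ∂ℙ := by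
    refine lintegral_congr fun ω => ?_
    by_cases h : ∀ j, s j ∈ A ω
    · rw [Set.indicator_of_mem (by exact h)]
      simp only [if_pos h]
      have : (∫⁻ ω', ⨆ j, (if s j ∈ A ω' then (1:ℝ≥0∞) else 0)
            / (if s j ∈ A ω then (1:ℝ≥0∞) else 0) ∂ℙ) = p := by
        rw [← hinner]
        refine lintegral_congr fun ω' => ?_
        refine iSup_congr fun j => ?_
        rw [if_pos (h j), div_one]
      rw [this, mul_one]
    · rw [Set.indicator_of_notMem (by exact h), if_neg h, mul_zero]
  rw [hstep, lintegral_indicator_const hA p⁻¹]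
  simp only [lintegral_const, Measure.restrict_apply MeasurableSet.univ, Set.univ_inter, ← hq]
  rw [ENNReal.div_eq_inv_mul]
end

section
/- Upper bound for the concurrence probability: for a simple max-stable process with spectral process Y (nonnegative, E[Y(s_j)] = 1 for all j), the extremal concurrence probability satisfies p(s_1,...,s_k) = E_Y([E_{Ỹ}(max_j Ỹ(s_j)/Y(s_j))]^{-1}) ≤ E[min_{j=1..k} Y(s_j)]. -/
open MeasureTheory ProbabilityTheory
open scoped ENNReal

/-- Upper bound for the extremal concurrence probability: with a nonnegative spectral
process `Y` satisfying `E[Y(s_j)] = 1` for all `j`, one has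
`p(s₁,…,s_k) = E_Y([E_Ỹ max_j Ỹ(s_j)/Y(s_j)]⁻¹) ≤ E[min_j Y(s_j)]`
(ratios taken in `ℝ≥0∞`, so `a/0 = ∞` for `a > 0` and `1/∞ = 0`). -/
theorem stmt12 {Ω : Type*} [MeasureSpace Ω] [IsProbabilityMeasure (ℙ : Measure Ω)]
    (k : ℕ) (hk : 0 < k) (Y : Ω → Fin k → ℝ)
    (hmeas : Measurable Y) (hnn : ∀ ω j, 0 ≤ Y ω j)
    (hmean : ∀ j, ∫⁻ ω, ENNReal.ofReal (Y ω j) ∂ℙ = 1) :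
    (∫⁻ ω, (∫⁻ ω', ⨆ j, ENNReal.ofReal (Y ω' j) / ENNReal.ofReal (Y ω j) ∂ℙ)⁻¹ ∂ℙ)
      ≤ ∫⁻ ω, ⨅ j, ENNReal.ofReal (Y ω j) ∂ℙ := by
  apply lintegral_mono
  intro ω
  have key : (⨅ j, ENNReal.ofReal (Y ω j))⁻¹
      ≤ ∫⁻ ω', ⨆ j, ENNReal.ofReal (Y ω' j) / ENNReal.ofReal (Y ω j) ∂ℙ := by
    rw [ENNReal.inv_iInf]
    apply iSup_le
    intro j
    have hm : Measurable fun ω' => ENNReal.ofReal (Y ω' j) :=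
      ENNReal.measurable_ofReal.comp ((measurable_pi_apply j).comp hmeas)
    calc (ENNReal.ofReal (Y ω j))⁻¹
        = (∫⁻ ω', ENNReal.ofReal (Y ω' j) ∂ℙ) * (ENNReal.ofReal (Y ω j))⁻¹ := by
          rw [hmean j, one_mul]
      _ = ∫⁻ ω', ENNReal.ofReal (Y ω' j) / ENNReal.ofReal (Y ω j) ∂ℙ := by
          rw [← lintegral_mul_const _ hm]; rfl
      _ ≤ ∫⁻ ω', ⨆ i, ENNReal.ofReal (Y ω' i) / ENNReal.ofReal (Y ω i) ∂ℙ :=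
          lintegral_mono fun ω' => le_iSup
            (fun i => ENNReal.ofReal (Y ω' i) / ENNReal.ofReal (Y ω i)) j
  calc (∫⁻ ω', ⨆ j, ENNReal.ofReal (Y ω' j) / ENNReal.ofReal (Y ω j) ∂ℙ)⁻¹
      ≤ ((⨅ j, ENNReal.ofReal (Y ω j))⁻¹)⁻¹ := ENNReal.inv_le_inv' key
    _ = ⨅ j, ENNReal.ofReal (Y ω j) := inv_inv _
end

section
/- Combinatorial identity for the permutation bootstrap estimator: with the notation d_i = #{ℓ : X_ℓ < X_i} (componentwise strict domination in all k coordinates), the Rao–Blackwellized estimator equals p̂*_m = C(n,m)^{-1} ∑_{i=1}^n C(d_i, m-1), where C(a,b) is the binomial coefficient and C(d_i, m-1) = 0 when d_i < m-1. -/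
/- Combinatorial identity for the permutation bootstrap estimator: for vectors
`X₁,…,Xₙ` in `ℝ^k` with no ties in any coordinate, the fraction of `m`-element subsets
in which sample concurrence occurs (some member strictly dominates all others
componentwise) equals `C(n,m)⁻¹ ∑ᵢ C(dᵢ, m-1)`, where
`dᵢ = #{ℓ : X_ℓ < X_i componentwise}`. -/
open Classical in
theorem stmt19 (n k m : ℕ) (hm1 : 1 ≤ m) (hmn : m ≤ n) (hk : 0 < k)
    (X : Fin n → Fin k → ℝ)
    (hties : ∀ i i' : Fin n, i ≠ i' → ∀ j, X i j ≠ X i' j) :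
    (((Finset.powersetCard m (Finset.univ : Finset (Fin n))).filter
        (fun S => ∃ i ∈ S, ∀ ℓ ∈ S, ℓ ≠ i → ∀ j, X ℓ j < X i j)).card : ℝ)
        / (n.choose m : ℝ)
      = (∑ i : Fin n,
          (((Finset.univ.filter (fun ℓ : Fin n => ∀ j, X ℓ j < X i j)).card.choose
            (m - 1) : ℕ) : ℝ)) / (n.choose m : ℝ) := by
  have j0 : Fin k := ⟨0, hk⟩
  set D : Fin n → Finset (Fin n) :=
    fun i => Finset.univ.filter (fun ℓ : Fin n => ∀ j, X ℓ j < X i j) with hD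
  have hmemD : ∀ i ℓ : Fin n, ℓ ∈ D i ↔ ∀ j, X ℓ j < X i j := by
    intro i ℓ; simp [hD]
  have hiD : ∀ i, i ∉ D i := by
    intro i hi
    exact lt_irrefl _ (((hmemD i i).1 hi) j0)
  have key : (Finset.powersetCard m (Finset.univ : Finset (Fin n))).filter
        (fun S => ∃ i ∈ S, ∀ ℓ ∈ S, ℓ ≠ i → ∀ j, X ℓ j < X i j)
      = Finset.univ.biUnion
          (fun i => (Finset.powersetCard (m-1) (D i)).image (insert i)) := by
    ext S
    simp only [Finset.mem_filter, Finset.mem_biUnion, Finset.mem_univ, true_and,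
      Finset.mem_image, Finset.mem_powersetCard]
    constructor
    · rintro ⟨⟨hSsub, hScard⟩, i, hiS, hdom⟩
      refine ⟨i, S.erase i, ⟨?_, ?_⟩, Finset.insert_erase hiS⟩
      · intro ℓ hℓ
        rw [Finset.mem_erase] at hℓ
        exact (hmemD i ℓ).2 (hdom ℓ hℓ.2 hℓ.1)
      · rw [Finset.card_erase_of_mem hiS, hScard]
    · rintro ⟨i, T, ⟨hTsub, hTcard⟩, rfl⟩
      have hiT : i ∉ T := fun h => hiD i (hTsub h)
      refine ⟨⟨Finset.subset_univ _, ?_⟩, i, Finset.mem_insert_self i T, ?_⟩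
      · rw [Finset.card_insert_of_notMem hiT, hTcard]; omega
      · intro ℓ hℓ hne
        rcases Finset.mem_insert.1 hℓ with h | h
        · exact absurd h hne
        · exact (hmemD i ℓ).1 (hTsub h)
  have hdisj : ∀ i ∈ (Finset.univ : Finset (Fin n)), ∀ i' ∈ (Finset.univ : Finset (Fin n)),
      i ≠ i' → Disjoint ((Finset.powersetCard (m-1) (D i)).image (insert i))
        ((Finset.powersetCard (m-1) (D i')).image (insert i')) := by
    intro i _ i' _ hne
    rw [Finset.disjoint_left]
    rintro S hS hS'
    simp only [Finset.mem_image, Finset.mem_powersetCard] at hS hS'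
    obtain ⟨T, ⟨hTsub, _⟩, rfl⟩ := hS
    obtain ⟨T', ⟨hTsub', _⟩, hEq⟩ := hS'
    have hi'mem : i' ∈ insert i T := by rw [← hEq]; exact Finset.mem_insert_self i' T'
    have himem : i ∈ insert i' T' := by rw [hEq]; exact Finset.mem_insert_self i T
    have h1 : i' ∈ T := by
      rcases Finset.mem_insert.1 hi'mem with h | h
      · exact absurd h.symm hne
      · exact h
    have h2 : i ∈ T' := by
      rcases Finset.mem_insert.1 himem with h | h
      · exact absurd h hne
      · exact h
    have lt1 := (hmemD i i').1 (hTsub h1) j0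
    have lt2 := (hmemD i' i).1 (hTsub' h2) j0
    exact lt_irrefl _ (lt1.trans lt2)
  rw [key, Finset.card_biUnion hdisj]
  congr 1
  push_cast
  refine Finset.sum_congr rfl fun i _ => ?_
  rw [Finset.card_image_of_injOn, Finset.card_powersetCard]
  intro T hT T' hT' hEq
  simp only [Finset.mem_coe, Finset.mem_powersetCard] at hT hT'
  have hiT : i ∉ T := fun h => hiD i (hT.1 h)
  have hiT' : i ∉ T' := fun h => hiD i (hT'.1 h)
  rw [← Finset.erase_insert hiT, ← Finset.erase_insert hiT', hEq]
end
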